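/- arXiv:1207.4533 — 2 statements merged into one kernel-verified Lean document; each statement's English description precedes it below -/
import Mathlib

section
/- For any integers s and even i = 2i', the conjugacy class of a^s u^(2i') in G is {a^s u^(2i'), a^(n_1 s) u^(2i'), a^(n_2 s) u^(-2i'), a^(-s) u^(-2i')}. -/
/-!
Conjugation by `u` multiplies the exponent of `a` by `n₁`, conjugation by `v` multiplies it by
`n₂` and inverts `u`, and `u²` centralises `a` because `n₁² ≡ 1 (mod 2^l)`. Since moreover
`n₂ ≡ -n₁`, the multipliers `1, n₁, n₂, -1` form a group modulo `2^l`, so conjugation by each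
generator permutes the four listed elements; the stabiliser of this set under conjugation
therefore contains the generators and is all of `G`. Conversely `1, u, v, uv` conjugate
`a^s u^(2i)` to the four elements.
-/

namespace ZkDl

def n₁ (l : ℕ) : ℕ := 2 ^ (l - 1) + 1
def n₂ (l : ℕ) : ℕ := 2 ^ (l - 1) - 1

/-- The relations of the presentation
`⟨a, u, v | a^(2^l) = u^k = v^2 = 1, u a u⁻¹ = a^(n₁), v a v = a^(n₂), v u v = u⁻¹⟩`,
with generators `a = 0`, `u = 1`, `v = 2` in `Fin 3`. -/
def rels (l k : ℕ) : Set (FreeGroup (Fin 3)) :=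
  { FreeGroup.of 0 ^ 2 ^ l,
    FreeGroup.of 1 ^ k,
    FreeGroup.of 2 ^ 2,
    FreeGroup.of 1 * FreeGroup.of 0 * (FreeGroup.of 1)⁻¹ * (FreeGroup.of 0 ^ n₁ l)⁻¹,
    FreeGroup.of 2 * FreeGroup.of 0 * FreeGroup.of 2 * (FreeGroup.of 0 ^ n₂ l)⁻¹,
    FreeGroup.of 2 * FreeGroup.of 1 * FreeGroup.of 2 * FreeGroup.of 1 }

/-- The group `Z_{2^l} ⋊ D_k` given by the presentation above. -/
abbrev G (l k : ℕ) : Type := PresentedGroup (rels l k)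

def a (l k : ℕ) : G l k := PresentedGroup.of 0
def u (l k : ℕ) : G l k := PresentedGroup.of 1
def v (l k : ℕ) : G l k := PresentedGroup.of 2

end ZkDl

open ZkDl

namespace ZkDl

variable {l k : ℕ}

section Relations

lemma a_pow_two_pow : a l k ^ 2 ^ l = 1 :=
  (map_pow (PresentedGroup.mk (rels l k)) _ _).symm.trans
    (PresentedGroup.one_of_mem (by simp [rels]))

lemma v_inv : (v l k)⁻¹ = v l k := by
  have h : v l k ^ 2 = 1 :=
    (map_pow (PresentedGroup.mk (rels l k)) _ _).symm.trans
      (PresentedGroup.one_of_mem (by simp [rels]))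
  exact inv_eq_of_mul_eq_one_right (sq (v l k) ▸ h)

lemma u_mul_a_mul_u_inv : u l k * a l k * (u l k)⁻¹ = a l k ^ n₁ l :=
  PresentedGroup.mk_eq_mk_of_mul_inv_mem (by simp [rels])

lemma v_mul_a_mul_v_inv : v l k * a l k * (v l k)⁻¹ = a l k ^ n₂ l := by
  rw [v_inv]
  exact PresentedGroup.mk_eq_mk_of_mul_inv_mem (by simp [rels])

lemma v_mul_u_mul_v_inv : v l k * u l k * (v l k)⁻¹ = (u l k)⁻¹ := by
  rw [v_inv]
  exact PresentedGroup.mk_eq_mk_of_mul_inv_mem (by simp [rels])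

end Relations

section Arithmetic

lemma neg_n₁_modEq_n₂ : -(n₁ l : ℤ) ≡ n₂ l [ZMOD 2 ^ l] := by
  cases l with
  | zero => exact Int.modEq_one
  | succ m =>
    refine Int.modEq_iff_dvd.mpr ⟨1, ?_⟩
    simp only [n₁, n₂, add_tsub_cancel_right, Nat.cast_sub Nat.one_le_two_pow]
    push_cast
    ring

lemma n₁_mul_n₁_modEq_one (hl : 2 ≤ l) : (n₁ l : ℤ) * n₁ l ≡ 1 [ZMOD 2 ^ l] := by
  obtain ⟨m, rfl⟩ := Nat.exists_eq_add_of_le' hl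
  refine (Int.modEq_iff_dvd.mpr ⟨2 ^ m + 1, ?_⟩).symm
  simp only [n₁]
  push_cast
  ring

lemma n₁_mul_n₂_modEq_neg_one (hl : 2 ≤ l) : (n₁ l : ℤ) * n₂ l ≡ -1 [ZMOD 2 ^ l] := by
  simpa using (neg_n₁_modEq_n₂.mul_left (n₁ l : ℤ)).symm.trans
    ((n₁_mul_n₁_modEq_one hl).neg)

lemma n₂_mul_n₂_modEq_one (hl : 2 ≤ l) : (n₂ l : ℤ) * n₂ l ≡ 1 [ZMOD 2 ^ l] := by
  have h := neg_n₁_modEq_n₂ (l := l)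
  simpa using (h.mul h).symm.trans (n₁_mul_n₁_modEq_one hl)

end Arithmetic

section Conjugation

lemma a_zpow_eq_of_modEq {t t' : ℤ} (h : t ≡ t' [ZMOD 2 ^ l]) : a l k ^ t = a l k ^ t' :=
  zpow_eq_zpow_iff_modEq.mpr <| h.of_dvd <| by
    exact_mod_cast orderOf_dvd_of_pow_eq_one a_pow_two_pow

lemma a_zpow_mul_mul_of_modEq {m m' c : ℤ} (h : m * m' ≡ c [ZMOD 2 ^ l]) (s : ℤ) :
    a l k ^ (m * (m' * s)) = a l k ^ (c * s) := by
  rw [← mul_assoc]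
  exact a_zpow_eq_of_modEq (h.mul_right s)

lemma a_zpow_mul_neg_of_modEq {m m' : ℤ} (h : -m ≡ m' [ZMOD 2 ^ l]) (s : ℤ) :
    a l k ^ (m * -s) = a l k ^ (m' * s) := by
  rw [mul_neg, ← neg_mul]
  exact a_zpow_eq_of_modEq (h.mul_right s)

lemma u_conj_a_zpow (t : ℤ) :
    u l k * a l k ^ t * (u l k)⁻¹ = a l k ^ ((n₁ l : ℤ) * t) := by
  rw [← conj_zpow, u_mul_a_mul_u_inv, ← zpow_natCast, ← zpow_mul]

lemma v_conj_a_zpow (t : ℤ) :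
    v l k * a l k ^ t * (v l k)⁻¹ = a l k ^ ((n₂ l : ℤ) * t) := by
  rw [← conj_zpow, v_mul_a_mul_v_inv, ← zpow_natCast, ← zpow_mul]

lemma v_conj_u_zpow (w : ℤ) : v l k * u l k ^ w * (v l k)⁻¹ = u l k ^ (-w) := by
  rw [← conj_zpow, v_mul_u_mul_v_inv, inv_zpow, zpow_neg]

lemma commute_a_u_zpow_two_mul (hl : 2 ≤ l) (w : ℤ) : Commute (a l k) (u l k ^ (2 * w)) := by
  have h : u l k ^ (2 : ℤ) * a l k * (u l k ^ (2 : ℤ))⁻¹ = a l k :=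
    calc u l k ^ (2 : ℤ) * a l k * (u l k ^ (2 : ℤ))⁻¹
        = u l k * (u l k * a l k ^ (1 : ℤ) * (u l k)⁻¹) * (u l k)⁻¹ := by
          simp only [zpow_two, zpow_one, mul_inv_rev, mul_assoc]
      _ = a l k ^ ((n₁ l : ℤ) * n₁ l * 1) := by rw [u_conj_a_zpow, u_conj_a_zpow, mul_assoc]
      _ = a l k := by
        rw [a_zpow_eq_of_modEq ((n₁_mul_n₁_modEq_one hl).mul_right 1), one_mul, zpow_one]
  rw [zpow_mul]
  have hcomm : Commute (a l k) (u l k ^ (2 : ℤ)) := (mul_inv_eq_iff_eq_mul.mp h).symm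
  exact hcomm.zpow_right w

lemma u_conj_a_zpow_mul_u_zpow (t w : ℤ) :
    u l k * (a l k ^ t * u l k ^ w) * (u l k)⁻¹ = a l k ^ ((n₁ l : ℤ) * t) * u l k ^ w := by
  rw [← u_conj_a_zpow]
  group

lemma v_conj_a_zpow_mul_u_zpow (t w : ℤ) :
    v l k * (a l k ^ t * u l k ^ w) * (v l k)⁻¹ =
      a l k ^ ((n₂ l : ℤ) * t) * u l k ^ (-w) := by
  rw [← v_conj_a_zpow, ← v_conj_u_zpow]
  group

lemma a_conj_a_zpow_mul_u_zpow_two_mul (hl : 2 ≤ l) (t w : ℤ) :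
    a l k * (a l k ^ t * u l k ^ (2 * w)) * (a l k)⁻¹ = a l k ^ t * u l k ^ (2 * w) := by
  calc a l k * (a l k ^ t * u l k ^ (2 * w)) * (a l k)⁻¹
      = a l k ^ t * (a l k * u l k ^ (2 * w) * (a l k)⁻¹) := by group
    _ = a l k ^ t * u l k ^ (2 * w) := by
      rw [(commute_a_u_zpow_two_mul hl w).eq, mul_inv_cancel_right]

end Conjugation

section ConjugacyClass

open Pointwise

def evenClass (l k : ℕ) (s i : ℤ) : Set (G l k) :=
  {a l k ^ s * u l k ^ (2 * i), a l k ^ ((n₁ l : ℤ) * s) * u l k ^ (2 * i),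
   a l k ^ ((n₂ l : ℤ) * s) * u l k ^ (-(2 * i)), a l k ^ (-s) * u l k ^ (-(2 * i))}

lemma toConjAct_a_smul_evenClass (hl : 2 ≤ l) (s i : ℤ) :
    ConjAct.toConjAct (a l k) • evenClass l k s i = evenClass l k s i := by
  simp only [evenClass, Set.smul_set_insert, Set.smul_set_singleton, ConjAct.smul_def,
    ConjAct.ofConjAct_toConjAct, ← mul_neg, a_conj_a_zpow_mul_u_zpow_two_mul hl]

lemma toConjAct_u_smul_evenClass (hl : 2 ≤ l) (s i : ℤ) :
    ConjAct.toConjAct (u l k) • evenClass l k s i = evenClass l k s i := by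
  simp only [evenClass, Set.smul_set_insert, Set.smul_set_singleton, ConjAct.smul_def,
    ConjAct.ofConjAct_toConjAct, u_conj_a_zpow_mul_u_zpow,
    a_zpow_mul_mul_of_modEq (n₁_mul_n₁_modEq_one hl), one_mul,
    a_zpow_mul_mul_of_modEq (n₁_mul_n₂_modEq_neg_one hl), neg_one_mul,
    a_zpow_mul_neg_of_modEq neg_n₁_modEq_n₂]
  rw [Set.insert_comm, Set.pair_comm]

lemma toConjAct_v_smul_evenClass (hl : 2 ≤ l) (s i : ℤ) :
    ConjAct.toConjAct (v l k) • evenClass l k s i = evenClass l k s i := by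
  have hn₂n₁ : (n₂ l : ℤ) * n₁ l ≡ -1 [ZMOD 2 ^ l] :=
    mul_comm (n₁ l : ℤ) (n₂ l) ▸ n₁_mul_n₂_modEq_neg_one hl
  have hneg_n₂ : -(n₂ l : ℤ) ≡ n₁ l [ZMOD 2 ^ l] := by
    simpa using neg_n₁_modEq_n₂.neg.symm
  simp only [evenClass, Set.smul_set_insert, Set.smul_set_singleton, ConjAct.smul_def,
    ConjAct.ofConjAct_toConjAct, v_conj_a_zpow_mul_u_zpow, neg_neg,
    a_zpow_mul_mul_of_modEq (n₂_mul_n₂_modEq_one hl), one_mul,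
    a_zpow_mul_mul_of_modEq hn₂n₁, neg_one_mul,
    a_zpow_mul_neg_of_modEq hneg_n₂]
  ext
  simp only [Set.mem_insert_iff, Set.mem_singleton_iff]
  tauto

lemma toConjAct_smul_evenClass (hl : 2 ≤ l) (s i : ℤ) (g : G l k) :
    ConjAct.toConjAct g • evenClass l k s i = evenClass l k s i := by
  let H := (MulAction.stabilizer (ConjAct (G l k)) (evenClass l k s i)).comap
    (ConjAct.toConjAct : G l k ≃* ConjAct (G l k)).toMonoidHom
  refine PresentedGroup.generated_by (rels l k) H (fun j => ?_) g
  fin_cases j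
  · exact toConjAct_a_smul_evenClass hl s i
  · exact toConjAct_u_smul_evenClass hl s i
  · exact toConjAct_v_smul_evenClass hl s i

end ConjugacyClass

end ZkDl

theorem conj_class_even_general (l k : ℕ) (hl : 3 ≤ l) (s i : ℤ) :
    {y : G l k | IsConj (a l k ^ s * u l k ^ (2 * i)) y} =
      {a l k ^ s * u l k ^ (2 * i),
       a l k ^ ((n₁ l : ℤ) * s) * u l k ^ (2 * i),
       a l k ^ ((n₂ l : ℤ) * s) * u l k ^ (-(2 * i)),
       a l k ^ (-s) * u l k ^ (-(2 * i))} := by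
  change _ = evenClass l k s i
  ext y
  refine ⟨fun hy => ?_, fun hy => ?_⟩
  · obtain ⟨c, rfl⟩ := isConj_iff.mp hy
    rw [← toConjAct_smul_evenClass (by omega) s i c]
    exact Set.smul_mem_smul_set (Set.mem_insert _ _)
  · rcases hy with rfl | rfl | rfl | rfl
    · exact IsConj.refl _
    · exact isConj_iff.mpr ⟨u l k, u_conj_a_zpow_mul_u_zpow s (2 * i)⟩
    · exact isConj_iff.mpr ⟨v l k, v_conj_a_zpow_mul_u_zpow s (2 * i)⟩
    · refine isConj_iff.mpr ⟨u l k * v l k, ?_⟩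
      rw [← neg_one_mul s, ← a_zpow_mul_mul_of_modEq (n₁_mul_n₂_modEq_neg_one (by omega)),
        ← u_conj_a_zpow_mul_u_zpow, ← v_conj_a_zpow_mul_u_zpow]
      group

theorem conj_class_even (l k : ℕ) (hl : 3 ≤ l) (hk : 4 ∣ k) (s i : ℤ) :
    {y : G l k | IsConj (a l k ^ s * u l k ^ (2 * i)) y} =
      {a l k ^ s * u l k ^ (2 * i),
       a l k ^ ((n₁ l : ℤ) * s) * u l k ^ (2 * i),
       a l k ^ ((n₂ l : ℤ) * s) * u l k ^ (-(2 * i)),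
       a l k ^ (-s) * u l k ^ (-(2 * i))} :=
  conj_class_even_general l k hl s i
end

section
/- Every element of G is conjugate to its own inverse; that is, G is completely real (ambivalent). -/
open ZkDl

/-!
Every element of `G` can be written as `a ^ i * u ^ j * v ^ e`. Elements `a ^ i * u ^ j * v` with
`j` odd are involutions. Products of two involutions are conjugate to their inverses, and both
`a ^ i * u ^ j = (a ^ i * u ^ j * v) * v` (for `j` odd) and
`a ^ i * u ^ j = (a ^ i * u ^ (j + 1) * v) * (u * v)` (for `j` even) are such products. The
remaining elements `a ^ i * u ^ (2 * s) * v` are inverted by conjugation with a suitable power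
of `a`.
-/

theorem isConj_mul_inv_of_sq_eq_one {G : Type*} [Group G] {x y : G} (hx : x ^ 2 = 1)
    (hy : y ^ 2 = 1) : IsConj (x * y) (x * y)⁻¹ := by
  have hx' : x⁻¹ = x := inv_eq_of_mul_eq_one_right (by rwa [← pow_two])
  have hy' : y⁻¹ = y := inv_eq_of_mul_eq_one_right (by rwa [← pow_two])
  refine isConj_iff.2 ⟨x, ?_⟩
  rw [mul_inv_rev, hx', hy', ← mul_assoc, ← pow_two, hx, one_mul]

namespace ZkDl

/-- Relations satisfied by the generators of `G l k` for `t = 2 ^ (l - 3)`, so that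
`2 ^ l = 8 * t`, `n₁ l = 4 * t + 1` and `n₂ l = 4 * t - 1`. -/
structure Relations {H : Type*} [Group H] (A U V : H) (t : ℤ) : Prop where
  zpow_A : A ^ (8 * t) = 1
  conj_U : U * A * U⁻¹ = A ^ (4 * t + 1)
  conj_V : V * A * V⁻¹ = A ^ (4 * t - 1)
  sq_V : V ^ 2 = 1
  conj_V_U : V * U * V⁻¹ = U⁻¹

namespace Relations

variable {H : Type*} [Group H] {A U V : H} {t : ℤ}

theorem zpow_A_eq_of_dvd (h : Relations A U V t) {x y : ℤ} (hxy : 8 * t ∣ x - y) :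
    A ^ x = A ^ y := by
  obtain ⟨c, hc⟩ := hxy
  rw [show x = y + 8 * t * c by linarith, zpow_add, zpow_mul, h.zpow_A, one_zpow, mul_one]

theorem mul_self_V (h : Relations A U V t) : V * V = 1 := by
  rw [← pow_two, h.sq_V]

theorem inv_V (h : Relations A U V t) : V⁻¹ = V :=
  inv_eq_of_mul_eq_one_right h.mul_self_V

theorem V_mul_U_mul_V (h : Relations A U V t) : V * U * V = U⁻¹ := by
  rw [← h.conj_V_U, h.inv_V]

theorem U_mul_zpow_A (h : Relations A U V t) (i : ℤ) :
    U * A ^ i = A ^ ((4 * t + 1) * i) * U := by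
  rw [zpow_mul, ← h.conj_U, conj_zpow, inv_mul_cancel_right]

theorem inv_U_mul_zpow_A (h : Relations A U V t) (i : ℤ) :
    U⁻¹ * A ^ i = A ^ ((4 * t + 1) * i) * U⁻¹ := by
  rw [inv_mul_eq_iff_eq_mul, ← mul_assoc, h.U_mul_zpow_A, mul_inv_cancel_right]
  exact h.zpow_A_eq_of_dvd ⟨-(2 * t + 1) * i, by ring⟩

theorem zpow_U_mul_zpow_A (h : Relations A U V t) (j i : ℤ) :
    U ^ j * A ^ i = A ^ (i + 4 * t * i * j) * U ^ j := by
  induction j using Int.induction_on generalizing i with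
  | zero => simp
  | succ n ih =>
    rw [zpow_add_one, mul_assoc, h.U_mul_zpow_A, ← mul_assoc, ih, mul_assoc]
    congr 1
    exact h.zpow_A_eq_of_dvd ⟨2 * t * i * n, by ring⟩
  | pred n ih =>
    rw [zpow_sub_one, mul_assoc, h.inv_U_mul_zpow_A, ← mul_assoc, ih, mul_assoc]
    congr 1
    exact h.zpow_A_eq_of_dvd ⟨i - 2 * t * i * n, by ring⟩

theorem V_mul_zpow_A (h : Relations A U V t) (i : ℤ) :
    V * A ^ i = A ^ ((4 * t - 1) * i) * V := by
  rw [zpow_mul, ← h.conj_V, conj_zpow, inv_mul_cancel_right]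

theorem V_mul_zpow_U (h : Relations A U V t) (j : ℤ) : V * U ^ j = U ^ (-j) * V := by
  rw [zpow_neg, ← inv_zpow, ← h.conj_V_U, conj_zpow, inv_mul_cancel_right]

theorem exists_eq_zpow_A_mul_zpow_U_mul_pow_V (h : Relations A U V t)
    (hgen : Subgroup.closure {A, U, V} = ⊤) (g : H) :
    ∃ (i j : ℤ) (e : ℕ), g = A ^ i * U ^ j * V ^ e := by
  have mul_A (ε i j : ℤ) (e : ℕ) :
      A ^ ε * (A ^ i * U ^ j * V ^ e) = A ^ (ε + i) * U ^ j * V ^ e := by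
    rw [zpow_add]; group
  have mul_U (ε i j : ℤ) (e : ℕ) :
      U ^ ε * (A ^ i * U ^ j * V ^ e) = A ^ (i + 4 * t * i * ε) * U ^ (ε + j) * V ^ e := by
    simp only [← mul_assoc]
    rw [h.zpow_U_mul_zpow_A, mul_assoc _ (U ^ ε), ← zpow_add]
  have mul_V (i j : ℤ) (e : ℕ) :
      V * (A ^ i * U ^ j * V ^ e) = A ^ ((4 * t - 1) * i) * U ^ (-j) * V ^ (e + 1) := by
    simp only [← mul_assoc]
    rw [h.V_mul_zpow_A, mul_assoc _ V, h.V_mul_zpow_U]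
    simp only [mul_assoc, pow_succ']
  have hg : g ∈ Subgroup.closure {A, U, V} := hgen ▸ Subgroup.mem_top g
  induction hg using Subgroup.closure_induction_left with
  | one => exact ⟨0, 0, 0, by simp⟩
  | mul_left x hx y _ ih =>
    obtain ⟨i, j, e, rfl⟩ := ih
    rcases hx with rfl | rfl | rfl
    · exact ⟨_, _, _, by rw [← mul_A 1 i j e, zpow_one]⟩
    · exact ⟨_, _, _, by rw [← mul_U 1 i j e, zpow_one]⟩
    · exact ⟨_, _, _, mul_V i j e⟩
  | inv_mul_cancel x hx y _ ih =>
    obtain ⟨i, j, e, rfl⟩ := ih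
    rcases hx with rfl | rfl | rfl
    · exact ⟨_, _, _, by rw [← mul_A (-1) i j e, zpow_neg_one]⟩
    · exact ⟨_, _, _, by rw [← mul_U (-1) i j e, zpow_neg_one]⟩
    · exact ⟨_, _, _, by rw [h.inv_V, mul_V]⟩

theorem zpow_A_mul_zpow_U_mul_V_mul (h : Relations A U V t) (a b j : ℤ) :
    A ^ a * U ^ j * V * (A ^ b * U ^ j * V) = A ^ (a + (4 * t - 1) * b * (1 + 4 * t * j)) := by
  simp only [mul_assoc]
  rw [← mul_assoc V, h.V_mul_zpow_A, mul_assoc, ← mul_assoc V, h.V_mul_zpow_U, mul_assoc,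
    h.mul_self_V, mul_one, ← mul_assoc (U ^ j), h.zpow_U_mul_zpow_A, mul_assoc, ← zpow_add,
    add_neg_cancel, zpow_zero, mul_one, ← zpow_add]
  congr 1
  ring

theorem sq_zpow_A_mul_zpow_U_mul_V (h : Relations A U V t) (i : ℤ) {j : ℤ} (hj : Odd j) :
    (A ^ i * U ^ j * V) ^ 2 = 1 := by
  obtain ⟨s, rfl⟩ := hj
  rw [pow_two, h.zpow_A_mul_zpow_U_mul_V_mul, ← zpow_zero A]
  exact h.zpow_A_eq_of_dvd ⟨i * (4 * t * s + 2 * t - s), by ring⟩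

theorem isConj_inv_zpow_A_mul_zpow_U (h : Relations A U V t) (i j : ℤ) :
    IsConj (A ^ i * U ^ j) (A ^ i * U ^ j)⁻¹ := by
  obtain ⟨s, rfl | rfl⟩ := Int.even_or_odd' j
  · have hUV : (U * V) ^ 2 = 1 := by
      simpa using h.sq_zpow_A_mul_zpow_U_mul_V 0 odd_one
    have hfactor : A ^ i * U ^ (2 * s) = A ^ i * U ^ (2 * s + 1) * V * (U * V) := by
      rw [zpow_add_one]
      simp only [mul_assoc]
      rw [← mul_assoc V U V, h.V_mul_U_mul_V, mul_inv_cancel, mul_one]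
    rw [hfactor]
    exact isConj_mul_inv_of_sq_eq_one
      (h.sq_zpow_A_mul_zpow_U_mul_V i (odd_two_mul_add_one s)) hUV
  · have hfactor : A ^ i * U ^ (2 * s + 1) = A ^ i * U ^ (2 * s + 1) * V * V := by
      rw [mul_assoc _ V, h.mul_self_V, mul_one]
    rw [hfactor]
    exact isConj_mul_inv_of_sq_eq_one (h.sq_zpow_A_mul_zpow_U_mul_V i (odd_two_mul_add_one s))
      h.sq_V

theorem isConj_inv_zpow_A_mul_zpow_U_mul_V (h : Relations A U V t) (i j : ℤ) :
    IsConj (A ^ i * U ^ j * V) (A ^ i * U ^ j * V)⁻¹ := by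
  obtain ⟨s, rfl | rfl⟩ := Int.even_or_odd' j
  · -- Conjugation by `A ^ m` multiplies `g = A ^ i * U ^ (2 * s) * V` by `A ^ ((2 - 4 * t) * m)`,
    -- while `g⁻¹ = A ^ (4 * t * i) * g`; so `m = 2 * t * i` works.
    set g := A ^ i * U ^ (2 * s) * V with hg
    refine isConj_iff.2 ⟨A ^ (2 * t * i), eq_inv_of_mul_eq_one_left ?_⟩
    calc A ^ (2 * t * i) * g * (A ^ (2 * t * i))⁻¹ * g
        = A ^ (2 * t * i + i) * U ^ (2 * s) * V * (A ^ (-(2 * t * i) + i) * U ^ (2 * s) * V) := by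
          rw [hg]; group
      _ = A ^ (0 : ℤ) := by
          rw [h.zpow_A_mul_zpow_U_mul_V_mul]
          exact h.zpow_A_eq_of_dvd ⟨i - t * i + s * (4 * t - 1) * (i - 2 * t * i), by ring⟩
      _ = 1 := zpow_zero A
  · have hsq := h.sq_zpow_A_mul_zpow_U_mul_V i (odd_two_mul_add_one s)
    rw [inv_eq_of_mul_eq_one_right ((pow_two _).symm.trans hsq)]

theorem isConj_inv (h : Relations A U V t) (hgen : Subgroup.closure {A, U, V} = ⊤) (g : H) :
    IsConj g g⁻¹ := by
  obtain ⟨i, j, e, rfl⟩ := h.exists_eq_zpow_A_mul_zpow_U_mul_pow_V hgen g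
  obtain ⟨r, rfl | rfl⟩ := Nat.even_or_odd' e
  · rw [pow_mul, h.sq_V, one_pow, mul_one]
    exact h.isConj_inv_zpow_A_mul_zpow_U i j
  · rw [pow_succ, pow_mul, h.sq_V, one_pow, one_mul]
    exact h.isConj_inv_zpow_A_mul_zpow_U_mul_V i j

end Relations

theorem a_pow (l k : ℕ) : a l k ^ 2 ^ l = 1 := by
  have := PresentedGroup.one_of_mem (show FreeGroup.of 0 ^ 2 ^ l ∈ rels l k by simp [rels])
  rwa [map_pow] at this

theorem v_sq (l k : ℕ) : v l k ^ 2 = 1 := by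
  have := PresentedGroup.one_of_mem (show FreeGroup.of 2 ^ 2 ∈ rels l k by simp [rels])
  rwa [map_pow] at this

theorem u_mul_a_mul_inv_u (l k : ℕ) : u l k * a l k * (u l k)⁻¹ = a l k ^ n₁ l := by
  have := PresentedGroup.mk_eq_mk_of_mul_inv_mem (show FreeGroup.of 1 * FreeGroup.of 0 *
    (FreeGroup.of 1)⁻¹ * (FreeGroup.of 0 ^ n₁ l)⁻¹ ∈ rels l k by simp [rels])
  rwa [map_mul, map_mul, map_inv, map_pow] at this

theorem v_mul_a_mul_v (l k : ℕ) : v l k * a l k * v l k = a l k ^ n₂ l := by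
  have := PresentedGroup.mk_eq_mk_of_mul_inv_mem (show FreeGroup.of 2 * FreeGroup.of 0 *
    FreeGroup.of 2 * (FreeGroup.of 0 ^ n₂ l)⁻¹ ∈ rels l k by simp [rels])
  rwa [map_mul, map_mul, map_pow] at this

theorem v_mul_u_mul_v (l k : ℕ) : v l k * u l k * v l k = (u l k)⁻¹ := by
  have := PresentedGroup.mk_eq_mk_of_mul_inv_mem (show FreeGroup.of 2 * FreeGroup.of 1 *
    FreeGroup.of 2 * (FreeGroup.of 1)⁻¹⁻¹ ∈ rels l k by simp [rels])
  rwa [map_mul, map_mul, map_inv] at this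

theorem relations_a_u_v (m k : ℕ) :
    Relations (a (m + 3) k) (u (m + 3) k) (v (m + 3) k) (2 ^ m) := by
  have h8 : (8 * 2 ^ m : ℤ) = ((2 ^ (m + 3) : ℕ) : ℤ) := by push_cast; ring
  have hn₁ : (4 * 2 ^ m + 1 : ℤ) = n₁ (m + 3) := by
    simp only [n₁, Nat.add_one_sub_one]; push_cast; ring
  have hn₂ : (4 * 2 ^ m - 1 : ℤ) = n₂ (m + 3) := by
    simp only [n₂, Nat.add_one_sub_one]; rw [Nat.cast_sub Nat.one_le_two_pow]; push_cast; ring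
  have hinv_v : (v (m + 3) k)⁻¹ = v (m + 3) k :=
    inv_eq_of_mul_eq_one_right (by rw [← pow_two, v_sq])
  refine ⟨?_, ?_, ?_, v_sq _ _, ?_⟩
  · rw [h8, zpow_natCast, a_pow]
  · rw [hn₁, zpow_natCast, u_mul_a_mul_inv_u]
  · rw [hn₂, zpow_natCast, hinv_v, v_mul_a_mul_v]
  · rw [hinv_v, v_mul_u_mul_v]

theorem closure_a_u_v (l k : ℕ) : Subgroup.closure {a l k, u l k, v l k} = ⊤ := by
  refine eq_top_iff.2 fun g _ => PresentedGroup.generated_by _ _ (fun j => ?_) g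
  fin_cases j <;> exact Subgroup.subset_closure (by simp [a, u, v])

end ZkDl

theorem completely_real_general (l k : ℕ) (hl : 3 ≤ l) (g : G l k) :
    IsConj g g⁻¹ := by
  obtain ⟨m, rfl⟩ := Nat.exists_eq_add_of_le' hl
  exact (relations_a_u_v m k).isConj_inv (closure_a_u_v _ _) g

theorem completely_real (l k : ℕ) (hl : 3 ≤ l) (hk : 4 ∣ k) (g : G l k) :
    IsConj g g⁻¹ :=
  completely_real_general l k hl g
end
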